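/- Let d ≥ 3 and δ ≥ 1 with d ≥ 2δ+1, g = (d-1)(d-2)/2 - δ. Let N be any numerical semigroup with N_d ⊆ N and exactly g gaps α_1 < ⋯ < α_g, and let α_1^{max} < ⋯ < α_g^{max} be the gaps of N^{max}_{d,δ} = N_d ∪ {(d-i-2)d+1 : 1 ≤ i ≤ δ}. Then α_i ≤ α_i^{max} for all 1 ≤ i ≤ g. -/

import Mathlib

def Nd (d : ℕ) : Set ℕ := {n | ∃ a b : ℕ, n = a * (d - 1) + b * d}

def Nmax (d δ : ℕ) : Set ℕ :=
  Nd d ∪ {n | ∃ i : ℕ, 1 ≤ i ∧ i ≤ δ ∧ n = (d - i - 2) * d + 1}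

lemma mem_Nd_iff {d : ℕ} (hd : 3 ≤ d) (n : ℕ) : n ∈ Nd d ↔ n % (d-1) * d ≤ n := by
  constructor
  · rintro ⟨a, b, rfl⟩
    have hbd : b * d = b * (d-1) + b := by
      have h1 : d - 1 + 1 = d := by omega
      calc b * d = b * ((d-1)+1) := by rw [h1]
      _ = b * (d-1) + b := by ring
    have hmod : (a * (d - 1) + b * d) % (d-1) = b % (d-1) := by
      rw [hbd, show a * (d-1) + (b * (d-1) + b) = b + (a+b) * (d-1) by ring,
        Nat.add_mul_mod_self_right]
    rw [hmod]
    calc b % (d-1) * d ≤ b * d := Nat.mul_le_mul_right d (Nat.mod_le _ _)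
    _ ≤ a * (d-1) + b * d := Nat.le_add_left _ _
  · intro h
    set r := n % (d-1) with hr
    set q := n / (d-1) with hq
    have hn : (d-1) * q + r = n := Nat.div_add_mod n (d-1)
    have hrd : r * d = r * (d-1) + r := by
      have h1 : d - 1 + 1 = d := by omega
      calc r * d = r * ((d-1)+1) := by rw [h1]
      _ = r * (d-1) + r := by ring
    have hrq : r ≤ q := by
      have h2 : (d-1) * r ≤ (d-1) * q := by
        rw [mul_comm (d-1) r]; omega
      exact Nat.le_of_mul_le_mul_left h2 (by omega)
    refine ⟨q - r, r, ?_⟩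
    have h3 : (q - r) * (d-1) + r * (d-1) = q * (d-1) := by
      rw [← Nat.add_mul]; congr 1; omega
    have h4 : q * (d-1) = (d-1) * q := mul_comm _ _
    omega

lemma gap_of {d : ℕ} (hd : 3 ≤ d) {r k : ℕ} (hr : r < d - 1) (hk : k < r) :
    (d-1) * k + r ∉ Nd d := by
  rw [mem_Nd_iff hd]
  push_neg
  have hmod : ((d-1) * k + r) % (d-1) = r := by
    rw [Nat.mul_add_mod, Nat.mod_eq_of_lt hr]
  rw [hmod]
  have hrd : r * d = r * (d-1) + r := by
    have h1 : d - 1 + 1 = d := by omega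
    calc r * d = r * ((d-1)+1) := by rw [h1]
    _ = r * (d-1) + r := by ring
  have : (d-1) * k < (d-1) * r := (Nat.mul_lt_mul_left (by omega : 0 < d - 1)).mpr hk
  have h4 : r * (d-1) = (d-1) * r := mul_comm _ _
  omega

lemma gap_repr {d s : ℕ} (hd : 3 ≤ d) (hs : s ∉ Nd d) :
    s / (d-1) < s % (d-1) ∧ s % (d-1) < d - 1 := by
  rw [mem_Nd_iff hd] at hs
  push_neg at hs
  set r := s % (d-1)
  set q := s / (d-1)
  refine ⟨?_, Nat.mod_lt _ (by omega)⟩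
  have hn : (d-1) * q + r = s := Nat.div_add_mod s (d-1)
  have hrd : r * d = r * (d-1) + r := by
    have h1 : d - 1 + 1 = d := by omega
    calc r * d = r * ((d-1)+1) := by rw [h1]
    _ = r * (d-1) + r := by ring
  have h2 : (d-1) * q < (d-1) * r := by rw [mul_comm (d-1) r]; omega
  exact Nat.lt_of_mul_lt_mul_left h2

lemma enum_le {g : ℕ} (α β : Fin g → ℕ) (hα : StrictMono α) (hβ : StrictMono β)
    (A B : Set ℕ) (hA : Set.range α = A) (hB : Set.range β = B)
    (h : ∀ n : ℕ, (B ∩ Set.Iic n).ncard ≤ (A ∩ Set.Iic n).ncard) :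
    ∀ i, α i ≤ β i := by
  intro i
  set n := β i with hn
  -- lower bound on |B ∩ Iic n|
  have hBfin : (B ∩ Set.Iic n).Finite := by
    apply Set.Finite.inter_of_left
    rw [← hB]; exact Set.finite_range β
  have hsub : β '' (Set.Iic i) ⊆ B ∩ Set.Iic n := by
    rintro x ⟨j, hj, rfl⟩
    exact ⟨hB ▸ Set.mem_range_self j, hβ.monotone hj⟩
  have hcard1 : (β '' (Set.Iic i)).ncard = i + 1 := by
    rw [Set.ncard_image_of_injective _ hβ.injective]
    rw [show (Set.Iic i) = ↑(Finset.Iic i) by simp, Set.ncard_coe_finset, Fin.card_Iic]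
  have h1 : i + 1 ≤ (B ∩ Set.Iic n).ncard := by
    rw [← hcard1]
    exact Set.ncard_le_ncard hsub hBfin
  have h2 : i + 1 ≤ (A ∩ Set.Iic n).ncard := le_trans h1 (h n)
  -- A ∩ Iic n = α '' T
  have hT : A ∩ Set.Iic n = α '' {j | α j ≤ n} := by
    ext x
    constructor
    · rintro ⟨hxA, hxn⟩
      rw [← hA] at hxA
      obtain ⟨j, rfl⟩ := hxA
      exact ⟨j, hxn, rfl⟩
    · rintro ⟨j, hj, rfl⟩
      exact ⟨hA ▸ Set.mem_range_self j, hj⟩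
  have hTcard : i + 1 ≤ ({j | α j ≤ n} : Set (Fin g)).ncard := by
    rw [hT, Set.ncard_image_of_injective _ hα.injective] at h2
    exact h2
  by_contra hc
  push_neg at hc
  have hsub2 : ({j | α j ≤ n} : Set (Fin g)) ⊆ Set.Iio i := by
    intro j hj
    by_contra hji
    simp only [Set.mem_Iio, not_lt] at hji
    exact absurd (le_trans (hα.monotone hji) hj) (not_le.mpr hc)
  have : ({j | α j ≤ n} : Set (Fin g)).ncard ≤ i := by
    calc _ ≤ (Set.Iio i).ncard := Set.ncard_le_ncard hsub2 (Set.toFinite _)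
    _ = i := by rw [show (Set.Iio i) = ↑(Finset.Iio i) by simp, Set.ncard_coe_finset, Fin.card_Iio]
  omega

lemma rect {d : ℕ} (hd : 3 ≤ d) (N : Set ℕ)
    (hadd : ∀ x ∈ N, ∀ y ∈ N, x + y ∈ N) (hN : Nd d ⊆ N)
    {s e : ℕ} (hsN : s ∈ N) (hsg : s ∉ Nd d) (hSfin : (N ∩ (Nd d)ᶜ).Finite)
    (he : (N ∩ (Nd d)ᶜ ∩ Set.Ici s).ncard ≤ e) :
    (d - e - 2) * d + 1 ≤ s := by
  obtain ⟨c, rfl⟩ : ∃ c, d = c + 1 := ⟨d-1, by omega⟩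
  have hc2 : 2 ≤ c := by omega
  have hc1 : c + 1 - 1 = c := by omega
  obtain ⟨hq, hr⟩ := gap_repr hd hsg
  rw [hc1] at hq hr
  set r := s % c with hrdef
  set q := s / c with hqdef
  have hn : c * q + r = s := Nat.div_add_mod s c
  set t := r - q with htdef
  set u := c - r with hudef
  have ht1 : 1 ≤ t := by omega
  have hu1 : 1 ≤ u := by omega
  -- the rectangle
  set f : ℕ × ℕ → ℕ := fun p => s + p.1 * c + p.2 * (c+1) with hfdef
  set F : Finset ℕ := ((Finset.range t) ×ˢ (Finset.range u)).image f with hFdef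
  have hmemform : ∀ a b : ℕ, a < t → b < u →
      s + a * c + b * (c+1) = c * (q + a + b) + (r + b) := by
    intro a b ha hb
    rw [← hn]; ring
  have hFsub : ↑F ⊆ N ∩ (Nd (c+1))ᶜ ∩ Set.Ici s := by
    intro x hx
    simp only [hFdef, Finset.coe_image, Set.mem_image, Finset.mem_coe,
      Finset.mem_product, Finset.mem_range] at hx
    obtain ⟨⟨a, b⟩, ⟨ha, hb⟩, rfl⟩ := hx
    refine ⟨⟨?_, ?_⟩, ?_⟩
    · have h1 : a * c + b * (c+1) ∈ Nd (c+1) := ⟨a, b, by rw [hc1]⟩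
      have := hadd s hsN _ (hN h1)
      simpa [hfdef, add_assoc] using this
    · simp only [hfdef, Set.mem_compl_iff]
      rw [hmemform a b ha hb]
      have := gap_of (d := c+1) hd (r := r + b) (k := q + a + b) (by omega) (by omega)
      rw [hc1] at this
      exact this
    · simp only [hfdef, Set.mem_Ici]; omega
  have hinj : Set.InjOn f ↑((Finset.range t) ×ˢ (Finset.range u)) := by
    rintro ⟨a, b⟩ hab ⟨a', b'⟩ hab' heq
    simp only [Finset.coe_product, Set.mem_prod, Finset.mem_coe, Finset.mem_range] at hab hab'
    simp only [hfdef] at heq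
    have key1 : ∀ x y : ℕ, s + x * c + y * (c+1) = s + ((x+y) * c + y) := by
      intro x y; ring
    rw [key1 a b, key1 a' b'] at heq
    have h1 : (a+b) * c + b = (a'+b') * c + b' := by omega
    have h2 : ((a+b) * c + b) % c = b := by
      rw [add_comm, Nat.add_mul_mod_self_right, Nat.mod_eq_of_lt (by omega)]
    have h3 : ((a'+b') * c + b') % c = b' := by
      rw [add_comm, Nat.add_mul_mod_self_right, Nat.mod_eq_of_lt (by omega)]
    have hb : b = b' := by rw [← h2, ← h3, h1]
    subst hb
    have ha : a = a' := by
      have h4 : (a+b) * c = (a'+b) * c := by omega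
      have h5 : a + b = a' + b := Nat.eq_of_mul_eq_mul_right (by omega) h4
      omega
    simp [ha]
  have hFcard : F.card = t * u := by
    rw [hFdef, Finset.card_image_of_injOn hinj, Finset.card_product,
      Finset.card_range, Finset.card_range]
  have htu : t * u ≤ e := by
    calc t * u = F.card := hFcard.symm
    _ = (↑F : Set ℕ).ncard := (Set.ncard_coe_finset F).symm
    _ ≤ (N ∩ (Nd (c+1))ᶜ ∩ Set.Ici s).ncard :=
        Set.ncard_le_ncard hFsub (hSfin.inter_of_left _)
    _ ≤ e := he
  have hsum : t + u ≤ e + 1 := by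
    obtain ⟨t', ht'⟩ := Nat.exists_eq_add_of_le ht1
    obtain ⟨u', hu'⟩ := Nat.exists_eq_add_of_le hu1
    have hx : t * u = (1 + t') * (1 + u') := by rw [← ht', ← hu']
    have hy : (1 + t') * (1 + u') = 1 + t' + u' + t' * u' := by ring
    omega
  -- conclude
  by_cases hce : c - 1 ≤ e
  · have h0 : c + 1 - e - 2 = 0 := by omega
    rw [h0]
    have : s ≠ 0 := by
      rintro rfl
      exact hsg ⟨0, 0, by ring⟩
    omega
  · push_neg at hce
    set m := c - 1 - e with hmdef
    have hqm : m ≤ q := by omega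
    have hrm : m + 1 ≤ r := by omega
    have hgoal : (c + 1 - e - 2) * (c+1) + 1 = m * (c+1) + 1 := by
      congr 2; omega
    rw [hgoal]
    have h1 : m * (c+1) + 1 = c * m + (m + 1) := by ring
    rw [h1]
    have h2 : c * m ≤ c * q := Nat.mul_le_mul_left c hqm
    omega

lemma key {d δ : ℕ} (hd : 3 ≤ d) (hδ : 1 ≤ δ) (hd2 : 2*δ+1 ≤ d)
    {N : Set ℕ} (hadd : ∀ x ∈ N, ∀ y ∈ N, x + y ∈ N) (hN : Nd d ⊆ N)
    (hSfin : (N ∩ (Nd d)ᶜ).Finite) (hScard : (N ∩ (Nd d)ᶜ).ncard = δ) (n : ℕ) :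
    ((N ∩ (Nd d)ᶜ) ∩ Set.Iic n).ncard ≤
      ({x | ∃ i, 1 ≤ i ∧ i ≤ δ ∧ x = (d-i-2)*d+1} ∩ Set.Iic n).ncard := by
  set S := N ∩ (Nd d)ᶜ with hSdef
  set c := (S ∩ Set.Iic n).ncard with hcdef
  rcases Nat.eq_zero_or_pos c with hc0 | hc1
  · omega
  have hfin1 : (S ∩ Set.Iic n).Finite := hSfin.inter_of_left _
  have hne : (S ∩ Set.Iic n).Nonempty := by
    rw [Set.nonempty_iff_ne_empty]
    intro hh
    rw [hcdef, hh, Set.ncard_empty] at hc1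
    omega
  obtain ⟨s, hs, hsmax⟩ := Set.Finite.exists_maximalFor id _ hfin1 hne
  simp only [id] at hsmax
  have hsmax' : ∀ x ∈ S ∩ Set.Iic n, x ≤ s := by
    intro x hx
    by_contra hcx
    push_neg at hcx
    have := hsmax hx (le_of_lt hcx)
    omega
  have hcδ : c ≤ δ := by
    rw [hcdef, ← hScard]
    exact Set.ncard_le_ncard Set.inter_subset_left hSfin
  -- bound on elements above s
  have hbound : (S ∩ Set.Ici s).ncard ≤ δ + 1 - c := by
    have hdisj : Disjoint ((S ∩ Set.Iic n) \ {s}) (S ∩ Set.Ici s) := by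
      rw [Set.disjoint_left]
      rintro x ⟨hx1, hx2⟩ ⟨_, hx3⟩
      simp only [Set.mem_singleton_iff] at hx2
      have := hsmax' x hx1
      have : x = s := le_antisymm this hx3
      exact hx2 this
    have hsub : ((S ∩ Set.Iic n) \ {s}) ∪ (S ∩ Set.Ici s) ⊆ S := by
      rintro x (⟨⟨h1, _⟩, _⟩ | ⟨h1, _⟩) <;> exact h1
    have h1 : (((S ∩ Set.Iic n) \ {s}) ∪ (S ∩ Set.Ici s)).ncard
        = (c - 1) + (S ∩ Set.Ici s).ncard := by
      rw [Set.ncard_union_eq hdisj hfin1.diff (hSfin.inter_of_left _)]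
      congr 1
      rw [Set.ncard_diff_singleton_of_mem hs]
    have h2 : (((S ∩ Set.Iic n) \ {s}) ∪ (S ∩ Set.Ici s)).ncard ≤ δ := by
      rw [← hScard]
      exact Set.ncard_le_ncard hsub hSfin
    omega
  obtain ⟨⟨hsN, hsg⟩, hsn⟩ := hs
  simp only [Set.mem_Iic] at hsn
  have hrect := rect hd N hadd hN hsN hsg hSfin hbound
  -- the image
  have hδd : δ + 2 ≤ d := by omega
  set i0 := δ + 1 - c with hi0def
  have hi01 : 1 ≤ i0 := by omega
  have hTsub : (fun j => (d-j-2)*d+1) '' Set.Icc i0 δ ⊆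
      {x | ∃ i, 1 ≤ i ∧ i ≤ δ ∧ x = (d-i-2)*d+1} ∩ Set.Iic n := by
    rintro x ⟨j, ⟨hj1, hj2⟩, rfl⟩
    refine ⟨⟨j, by omega, hj2, rfl⟩, ?_⟩
    have hle : (d-j-2) ≤ (d-i0-2) := by omega
    have : (d-j-2)*d ≤ (d-i0-2)*d := Nat.mul_le_mul_right d hle
    simp only [Set.mem_Iic]
    omega
  have hinj : Set.InjOn (fun j => (d-j-2)*d+1) (Set.Icc i0 δ) := by
    rintro x ⟨hx1, hx2⟩ y ⟨hy1, hy2⟩ hxy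
    simp only at hxy
    have h1 : (d-x-2)*d = (d-y-2)*d := by omega
    have h2 : d-x-2 = d-y-2 := Nat.eq_of_mul_eq_mul_right (by omega) h1
    omega
  have hTcard : ((fun j => (d-j-2)*d+1) '' Set.Icc i0 δ).ncard = c := by
    rw [Set.ncard_image_of_injOn hinj, ← Finset.coe_Icc, Set.ncard_coe_finset,
      Nat.card_Icc]
    omega
  calc c = ((fun j => (d-j-2)*d+1) '' Set.Icc i0 δ).ncard := hTcard.symm
  _ ≤ _ := Set.ncard_le_ncard hTsub ((Set.finite_Iic n).inter_of_right _)

theorem stmt13 (d δ g : ℕ) (hd : 3 ≤ d) (hδ : 1 ≤ δ) (hd2 : 2 * δ + 1 ≤ d)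
    (hg : g = (d - 1) * (d - 2) / 2 - δ)
    (N : Set ℕ) (h0 : 0 ∈ N) (hadd : ∀ x ∈ N, ∀ y ∈ N, x + y ∈ N)
    (hfin : Nᶜ.Finite) (hN : Nd d ⊆ N) (hcard : Nᶜ.ncard = g)
    (α : Fin g → ℕ) (hα : StrictMono α) (hαrange : Set.range α = Nᶜ)
    (αmax : Fin g → ℕ) (hαmax : StrictMono αmax)
    (hαmaxrange : Set.range αmax = (Nmax d δ)ᶜ) :
    ∀ i : Fin g, α i ≤ αmax i := by
  set G := (Nd d)ᶜ with hGdef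
  set Sm : Set ℕ := {x | ∃ i, 1 ≤ i ∧ i ≤ δ ∧ x = (d-i-2)*d+1} with hSmdef
  -- G is finite
  have hGfin : G.Finite := by
    apply Set.Finite.subset (Set.finite_Iio ((d-1)*d))
    intro x hx
    rw [hGdef, Set.mem_compl_iff, mem_Nd_iff hd] at hx
    push_neg at hx
    have h1 : x % (d-1) < d - 1 := Nat.mod_lt _ (by omega)
    have h2 : x % (d-1) * d ≤ (d-1) * d := Nat.mul_le_mul_right d (by omega)
    simp only [Set.mem_Iio]
    omega
  -- Sm ⊆ G
  have hSmG : Sm ⊆ G := by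
    rintro x ⟨i, hi1, hi2, rfl⟩
    have heq : (d-1) * (d-2-i) + (d-1-i) = (d-i-2)*d+1 := by
      obtain ⟨a, rfl⟩ : ∃ a, d = i + 2 + a := ⟨d-i-2, by omega⟩
      have e1 : i + 2 + a - 1 = i + 1 + a := by omega
      have e2 : i + 2 + a - 2 - i = a := by omega
      have e4 : i + 2 + a - i - 2 = a := by omega
      rw [e1, e2, e4]
      have e3 : i + 1 + a - i = a + 1 := by omega
      rw [e3]
      ring
    rw [hGdef, Set.mem_compl_iff, ← heq]
    exact gap_of hd (by omega) (by omega)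
  -- (Nmax)ᶜ = G \ Sm
  have hNmaxc : (Nmax d δ)ᶜ = G \ Sm := by
    rw [Nmax, Set.compl_union, Set.diff_eq]
  -- card of Sm
  have hSmcard : Sm.ncard = δ := by
    have himg : Sm = (fun i => (d-i-2)*d+1) '' Set.Icc 1 δ := by
      ext x
      simp only [hSmdef, Set.mem_setOf_eq, Set.mem_image, Set.mem_Icc]
      constructor
      · rintro ⟨i, h1, h2, rfl⟩; exact ⟨i, ⟨h1, h2⟩, rfl⟩
      · rintro ⟨i, ⟨h1, h2⟩, rfl⟩; exact ⟨i, h1, h2, rfl⟩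
    have hinj : Set.InjOn (fun i => (d-i-2)*d+1) (Set.Icc 1 δ) := by
      rintro x ⟨hx1, hx2⟩ y ⟨hy1, hy2⟩ hxy
      simp only at hxy
      have h1 : (d-x-2)*d = (d-y-2)*d := by omega
      have h2 : d-x-2 = d-y-2 := Nat.eq_of_mul_eq_mul_right (by omega) h1
      omega
    rw [himg, Set.ncard_image_of_injOn hinj, ← Finset.coe_Icc, Set.ncard_coe_finset,
      Nat.card_Icc]
    omega
  -- card of Nmaxᶜ is g
  have hNmaxcard : ((Nmax d δ)ᶜ).ncard = g := by
    rw [← hαmaxrange, ← Set.image_univ, Set.ncard_image_of_injective _ hαmax.injective,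
      Set.ncard_univ, Nat.card_eq_fintype_card, Fintype.card_fin]
  -- card of G
  have hGcard : G.ncard = g + δ := by
    have h1 : (G \ Sm).ncard = G.ncard - Sm.ncard := Set.ncard_diff hSmG (hGfin.subset hSmG)
    have h2 : Sm.ncard ≤ G.ncard := Set.ncard_le_ncard hSmG hGfin
    rw [← hNmaxc] at h1
    omega
  -- S and its card
  set S := N ∩ G with hSdef
  have hNcG : Nᶜ ⊆ G := Set.compl_subset_compl.mpr hN
  have hSG : S = G \ Nᶜ := by
    rw [hSdef, Set.diff_eq, compl_compl, Set.inter_comm]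
  have hSfin : S.Finite := hGfin.inter_of_right _
  have hScard : S.ncard = δ := by
    have h1 : (G \ Nᶜ).ncard = G.ncard - Nᶜ.ncard := Set.ncard_diff hNcG (hGfin.subset hNcG)
    have h2 : Nᶜ.ncard ≤ G.ncard := Set.ncard_le_ncard hNcG hGfin
    rw [← hSG] at h1
    omega
  have hNcS : Nᶜ = G \ S := by
    rw [hSG, Set.diff_diff_right_self, Set.inter_eq_self_of_subset_right hNcG]
  -- counting inequality
  have hcount : ∀ n : ℕ, ((Nmax d δ)ᶜ ∩ Set.Iic n).ncard ≤ (Nᶜ ∩ Set.Iic n).ncard := by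
    intro n
    have hA : (G ∩ Set.Iic n).Finite := hGfin.inter_of_left _
    have e1 : (Nmax d δ)ᶜ ∩ Set.Iic n = (G ∩ Set.Iic n) \ (Sm ∩ Set.Iic n) := by
      rw [hNmaxc]; ext x
      simp only [Set.mem_diff, Set.mem_inter_iff, Set.mem_Iic]
      tauto
    have e2 : Nᶜ ∩ Set.Iic n = (G ∩ Set.Iic n) \ (S ∩ Set.Iic n) := by
      rw [hNcS]; ext x
      simp only [Set.mem_diff, Set.mem_inter_iff, Set.mem_Iic]
      tauto
    rw [e1, e2]
    have hsub1 : Sm ∩ Set.Iic n ⊆ G ∩ Set.Iic n := by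
      rintro x ⟨h1, h2⟩; exact ⟨hSmG h1, h2⟩
    have hsub2 : S ∩ Set.Iic n ⊆ G ∩ Set.Iic n := by
      rintro x ⟨h1, h2⟩; exact ⟨Set.inter_subset_right h1, h2⟩
    rw [Set.ncard_diff hsub1 (hA.subset hsub1), Set.ncard_diff hsub2 (hA.subset hsub2)]
    have hkey : (S ∩ Set.Iic n).ncard ≤ (Sm ∩ Set.Iic n).ncard := by
      have := key hd hδ hd2 hadd hN (by rwa [← hGdef, ← hSdef]) (by rwa [← hGdef, ← hSdef]) n
      rw [← hGdef, ← hSdef, ← hSmdef] at this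
      exact this
    have h1 : (Sm ∩ Set.Iic n).ncard ≤ (G ∩ Set.Iic n).ncard :=
      Set.ncard_le_ncard hsub1 hA
    omega
  exact enum_le α αmax hα hαmax Nᶜ ((Nmax d δ)ᶜ) hαrange hαmaxrange hcount
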